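/- With A of full row rank and S the optimal solution multifunction of the extended ℓ₁ regularization problem, the graph of S is a closed subset of ℝ₊ × ℝ^m × ℝ^n. -/

import Mathlib

open Set

noncomputable section

variable {m n : ℕ}

/-- Euclidean distance between two vectors. -/
def en {k : ℕ} (x x' : Fin k → ℝ) : ℝ := Real.sqrt (∑ i, (x i - x' i) ^ 2)

/-- The ℓ₁ norm. -/
def l1 {k : ℕ} (x : Fin k → ℝ) : ℝ := ∑ i, |x i|

/-- Squared Euclidean norm. -/
def sqnorm {k : ℕ} (y : Fin k → ℝ) : ℝ := ∑ i, (y i) ^ 2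

/-- `A_iᵀ y`, the dot product of the `i`-th column of `A` with `y`. -/
def colDot (A : Matrix (Fin m) (Fin n) ℝ) (i : Fin n) (y : Fin m → ℝ) : ℝ := ∑ k, A k i * y k

/-- The dual feasible set `Y⁰ = {y : ‖Aᵀy‖_∞ ≤ 1}`. -/
def Ydual (A : Matrix (Fin m) (Fin n) ℝ) : Set (Fin m → ℝ) := {y | ∀ i, |colDot A i y| ≤ 1}

/-- `F` is a face of `C`: the argmax set of a linear functional over `C`. -/
def IsFaceOf (C F : Set (Fin m → ℝ)) : Prop :=
  ∃ v : Fin m → ℝ, F = {y | y ∈ C ∧ ∀ z ∈ C, ∑ k, v k * z k ≤ ∑ k, v k * y k}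

/-- `𝒜⁺(F)`. -/
def Aplus (A : Matrix (Fin m) (Fin n) ℝ) (F : Set (Fin m → ℝ)) : Set (Fin n) :=
  {i | ∀ y ∈ F, colDot A i y = 1}

/-- `𝒜⁻(F)`. -/
def Aminus (A : Matrix (Fin m) (Fin n) ℝ) (F : Set (Fin m → ℝ)) : Set (Fin n) :=
  {i | ∀ y ∈ F, colDot A i y = -1}

/-- `𝒜⁰(F)`. -/
def Azero (A : Matrix (Fin m) (Fin n) ℝ) (F : Set (Fin m → ℝ)) : Set (Fin n) :=
  {i | ∃ y ∈ F, -1 < colDot A i y ∧ colDot A i y < 1}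

/-- Solution set of the extended ℓ₁ regularization problem:
basis pursuit when `lam = 0`, Lasso-type problem when `lam > 0`. -/
def Sol (A : Matrix (Fin m) (Fin n) ℝ) (lam : ℝ) (b : Fin m → ℝ) : Set (Fin n → ℝ) :=
  if lam = 0 then
    {x | A.mulVec x = b ∧ ∀ z, A.mulVec z = b → l1 x ≤ l1 z}
  else
    {x | ∀ z, l1 x + 1 / (2 * lam) * sqnorm (A.mulVec x - b) ≤
          l1 z + 1 / (2 * lam) * sqnorm (A.mulVec z - b)}

/-- Graph of the solution multifunction `S`. -/
def gphS (A : Matrix (Fin m) (Fin n) ℝ) : Set (ℝ × (Fin m → ℝ) × (Fin n → ℝ)) :=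
  {p | 0 ≤ p.1 ∧ p.2.2 ∈ Sol A p.1 p.2.1}

/-- `A_iᵀ(b − Ax)`. -/
def resid (A : Matrix (Fin m) (Fin n) ℝ) (b : Fin m → ℝ) (x : Fin n → ℝ) (i : Fin n) : ℝ :=
  colDot A i (b - A.mulVec x)

/-- The polyhedral cone `S_F` associated with a face `F` of `Y⁰`. -/
def SFace (A : Matrix (Fin m) (Fin n) ℝ) (F : Set (Fin m → ℝ)) :
    Set (ℝ × (Fin m → ℝ) × (Fin n → ℝ)) :=
  {p | 0 ≤ p.1 ∧
    (∀ i ∈ Aplus A F, 0 ≤ p.2.2 i ∧ resid A p.2.1 p.2.2 i = p.1) ∧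
    (∀ i ∈ Azero A F, p.2.2 i = 0 ∧ |resid A p.2.1 p.2.2 i| ≤ p.1) ∧
    (∀ i ∈ Aminus A F, p.2.2 i ≤ 0 ∧ resid A p.2.1 p.2.2 i = -p.1)}

/-- `cl W(I⁺, I⁰, I⁻)`. -/
def clW (Ip I0 Im : Set (Fin n)) : Set (Fin n → ℝ) :=
  {x | (∀ i ∈ Ip, 0 ≤ x i) ∧ (∀ i ∈ I0, x i = 0) ∧ (∀ i ∈ Im, x i ≤ 0)}

/-- `W(I⁺, I⁰, I⁻)`. -/
def Wset (Ip I0 Im : Set (Fin n)) : Set (Fin n → ℝ) :=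
  {x | (∀ i ∈ Ip, 0 < x i) ∧ (∀ i ∈ I0, x i = 0) ∧ (∀ i ∈ Im, x i < 0)}

/-- The projection `D_F` of `S_F` onto the `(λ, b)` coordinates. -/
def DFace (A : Matrix (Fin m) (Fin n) ℝ) (F : Set (Fin m → ℝ)) : Set (ℝ × (Fin m → ℝ)) :=
  (fun p => (p.1, p.2.1)) '' SFace A F

/-- The convex subdifferential of the ℓ₁ norm. -/
def l1subdiff {k : ℕ} (x : Fin k → ℝ) : Set (Fin k → ℝ) :=
  {v | ∀ z, l1 x + ∑ i, v i * (z i - x i) ≤ l1 z}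

/-- Polyhedral subset of `ℝ × ℝ^m × ℝ^n`: a finite intersection of closed half-spaces. -/
def IsPolyhedral3 (s : Set (ℝ × (Fin m → ℝ) × (Fin n → ℝ))) : Prop :=
  ∃ (k : ℕ) (a : Fin k → ℝ × (Fin m → ℝ) × (Fin n → ℝ)) (β : Fin k → ℝ),
    s = {p | ∀ j, (a j).1 * p.1 + (∑ t, (a j).2.1 t * p.2.1 t) +
          (∑ t, (a j).2.2 t * p.2.2 t) ≤ β j}

/-- Lipschitz continuity of a set-valued map on a set `X`, with constant `κ`. -/
def LipOn {a b : ℕ} (G : (Fin a → ℝ) → Set (Fin b → ℝ)) (X : Set (Fin a → ℝ)) (κ : ℝ) : Prop :=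
  (∀ x ∈ X, (G x).Nonempty ∧ IsClosed (G x)) ∧
  ∀ x ∈ X, ∀ x' ∈ X, ∀ y' ∈ G x', ∃ y ∈ G x, en y' y ≤ κ * en x' x

end

section Aux

variable {m n : ℕ}

lemma l1_nonneg {k : ℕ} (x : Fin k → ℝ) : 0 ≤ l1 x :=
  Finset.sum_nonneg fun i _ => abs_nonneg _

lemma sqnorm_nonneg {k : ℕ} (y : Fin k → ℝ) : 0 ≤ sqnorm y :=
  Finset.sum_nonneg fun i _ => sq_nonneg _

lemma sqnorm_zero {k : ℕ} : sqnorm (0 : Fin k → ℝ) = 0 := by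
  simp [sqnorm]

lemma eq_of_sqnorm_le_zero {k : ℕ} {y : Fin k → ℝ} (h : sqnorm y ≤ 0) : y = 0 := by
  have h0 : sqnorm y = 0 := le_antisymm h (sqnorm_nonneg y)
  funext i
  have := (Finset.sum_eq_zero_iff_of_nonneg (fun i _ => sq_nonneg (y i))).1 h0 i
    (Finset.mem_univ i)
  exact pow_eq_zero_iff (by norm_num) |>.1 this

lemma l1_add_le {k : ℕ} (x y : Fin k → ℝ) : l1 (x + y) ≤ l1 x + l1 y := by
  rw [l1, l1, l1, ← Finset.sum_add_distrib]
  exact Finset.sum_le_sum fun i _ => abs_add_le _ _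

lemma continuous_l1 {k : ℕ} : Continuous (l1 : (Fin k → ℝ) → ℝ) :=
  continuous_finset_sum _ fun i _ => continuous_abs.comp (continuous_apply i)

lemma continuous_sqnorm {k : ℕ} : Continuous (sqnorm : (Fin k → ℝ) → ℝ) :=
  continuous_finset_sum _ fun i _ => ((continuous_apply i).pow 2)

lemma continuous_mulVec (A : Matrix (Fin m) (Fin n) ℝ) : Continuous A.mulVec := by
  have : Continuous A.mulVecLin := A.mulVecLin.continuous_of_finiteDimensional
  exact this

/-- Key inequality valid uniformly in `λ ≥ 0` on the graph. -/
lemma keyG (A : Matrix (Fin m) (Fin n) ℝ) {lam : ℝ} {b : Fin m → ℝ} {x : Fin n → ℝ}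
    (h : (lam, b, x) ∈ gphS A) (z : Fin n → ℝ) :
    lam * l1 x + (1/2) * sqnorm (A.mulVec x - b) ≤
      lam * l1 z + (1/2) * sqnorm (A.mulVec z - b) := by
  obtain ⟨hlam, hsol⟩ := h
  dsimp only at hlam hsol
  rcases eq_or_lt_of_le hlam with h0 | hpos
  · rw [Sol, if_pos h0.symm] at hsol
    obtain ⟨hAx, _⟩ := hsol
    rw [← h0, hAx, sub_self, sqnorm_zero]
    have := sqnorm_nonneg (A.mulVec z - b)
    nlinarith
  · rw [Sol, if_neg (ne_of_gt hpos)] at hsol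
    have hz := hsol z
    have hne : (2 * lam) ≠ 0 := by positivity
    have hlne : lam ≠ 0 := ne_of_gt hpos
    have h2 := mul_le_mul_of_nonneg_left hz hpos.le
    have e : ∀ S t : ℝ, lam * (t + 1 / (2 * lam) * S) = lam * t + (1/2) * S := by
      intro S t; field_simp
    rw [e, e] at h2
    exact h2

/-- Second key inequality, using a linear right inverse `g` of `A`. -/
lemma keyL (A : Matrix (Fin m) (Fin n) ℝ) (g : (Fin m → ℝ) →ₗ[ℝ] (Fin n → ℝ))
    (hg : ∀ y, A.mulVec (g y) = y) {lam : ℝ} {b : Fin m → ℝ} {x : Fin n → ℝ}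
    (h : (lam, b, x) ∈ gphS A) (z : Fin n → ℝ) :
    l1 x ≤ l1 (z + g (b - A.mulVec z)) + l1 (g (A.mulVec x - b)) := by
  obtain ⟨hlam, hsol⟩ := h
  dsimp only at hlam hsol
  rcases eq_or_lt_of_le hlam with h0 | hpos
  · rw [Sol, if_pos h0.symm] at hsol
    obtain ⟨hAx, hmin⟩ := hsol
    have hw : A.mulVec (z + g (b - A.mulVec z)) = b := by
      rw [Matrix.mulVec_add, hg]; abel
    have h1 := hmin _ hw
    have h2 : l1 (g (A.mulVec x - b)) = 0 := by
      rw [hAx, sub_self, map_zero]; simp [l1]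
    linarith
  · rw [Sol, if_neg (ne_of_gt hpos)] at hsol
    set w := z + g (b - A.mulVec z) + g (A.mulVec x - b) with hw
    have hAw : A.mulVec w - b = A.mulVec x - b := by
      rw [hw, Matrix.mulVec_add, Matrix.mulVec_add, hg, hg]; abel
    have h1 := hsol w
    rw [hAw] at h1
    have h2 : l1 x ≤ l1 w := by linarith
    calc l1 x ≤ l1 w := h2
      _ ≤ _ := l1_add_le _ _

end Aux


theorem stmt7 {m n : ℕ} (A : Matrix (Fin m) (Fin n) ℝ) (hrank : A.rank = m) :
    IsClosed (gphS A) := by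
  -- obtain a linear right inverse of A from full row rank
  have hsurj : LinearMap.range A.mulVecLin = ⊤ := by
    apply Submodule.eq_top_of_finrank_eq
    rw [← Matrix.rank, hrank]
    simp
  obtain ⟨g, hg0⟩ := A.mulVecLin.exists_rightInverse_of_surjective hsurj
  have hg : ∀ y, A.mulVec (g y) = y := by
    intro y
    have := congrArg (fun f => f y) hg0
    simpa [Matrix.mulVecLin_apply] using this
  -- sequential closedness
  apply IsSeqClosed.isClosed
  intro u p hu hup
  have hl : Filter.Tendsto (fun k => (u k).1) Filter.atTop (nhds p.1) :=
    (continuous_fst.tendsto p).comp hup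
  have hb : Filter.Tendsto (fun k => (u k).2.1) Filter.atTop (nhds p.2.1) :=
    ((continuous_fst.comp continuous_snd).tendsto p).comp hup
  have hx : Filter.Tendsto (fun k => (u k).2.2) Filter.atTop (nhds p.2.2) :=
    ((continuous_snd.comp continuous_snd).tendsto p).comp hup
  have hAx : Filter.Tendsto (fun k => A.mulVec ((u k).2.2)) Filter.atTop
      (nhds (A.mulVec p.2.2)) :=
    ((continuous_mulVec A).tendsto _).comp hx
  have hres : Filter.Tendsto (fun k => A.mulVec ((u k).2.2) - (u k).2.1) Filter.atTop
      (nhds (A.mulVec p.2.2 - p.2.1)) := hAx.sub hb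
  have hS : Filter.Tendsto (fun k => sqnorm (A.mulVec ((u k).2.2) - (u k).2.1)) Filter.atTop
      (nhds (sqnorm (A.mulVec p.2.2 - p.2.1))) :=
    (continuous_sqnorm.tendsto _).comp hres
  have hl1x : Filter.Tendsto (fun k => l1 ((u k).2.2)) Filter.atTop (nhds (l1 p.2.2)) :=
    (continuous_l1.tendsto _).comp hx
  have hmem : ∀ k, ((u k).1, (u k).2.1, (u k).2.2) ∈ gphS A := fun k => hu k
  have hlam0 : 0 ≤ p.1 := ge_of_tendsto' hl (fun k => (hu k).1)
  refine ⟨hlam0, ?_⟩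
  rcases eq_or_lt_of_le hlam0 with h0 | hpos
  · -- λ = 0 case
    rw [Sol, if_pos h0.symm]
    -- first: A x = b
    have hbound : ∀ k, sqnorm (A.mulVec ((u k).2.2) - (u k).2.1) ≤
        2 * (u k).1 * l1 (g ((u k).2.1)) := by
      intro k
      have hk := keyG A (hmem k) (g ((u k).2.1))
      rw [hg, sub_self, sqnorm_zero] at hk
      have h1 := l1_nonneg ((u k).2.2)
      have h2 := (hu k).1
      nlinarith
    have hrhs : Filter.Tendsto (fun k => 2 * (u k).1 * l1 (g ((u k).2.1))) Filter.atTop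
        (nhds (2 * p.1 * l1 (g p.2.1))) := by
      exact ((tendsto_const_nhds.mul hl).mul
        ((continuous_l1.tendsto _).comp ((g.continuous_of_finiteDimensional.tendsto _).comp hb)))
    have hle : sqnorm (A.mulVec p.2.2 - p.2.1) ≤ 2 * p.1 * l1 (g p.2.1) :=
      le_of_tendsto_of_tendsto' hS hrhs hbound
    rw [← h0] at hle
    simp only [mul_zero, zero_mul] at hle
    have hAxb : A.mulVec p.2.2 = p.2.1 := by
      have := eq_of_sqnorm_le_zero hle
      have := sub_eq_zero.mp this
      exact this
    refine ⟨hAxb, ?_⟩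
    intro z hz
    -- use keyL
    have hbd : ∀ k, l1 ((u k).2.2) ≤
        l1 (z + g ((u k).2.1 - A.mulVec z)) + l1 (g (A.mulVec ((u k).2.2) - (u k).2.1)) :=
      fun k => keyL A g hg (hmem k) z
    have hrhs2 : Filter.Tendsto
        (fun k => l1 (z + g ((u k).2.1 - A.mulVec z)) +
          l1 (g (A.mulVec ((u k).2.2) - (u k).2.1))) Filter.atTop
        (nhds (l1 (z + g (p.2.1 - A.mulVec z)) + l1 (g (A.mulVec p.2.2 - p.2.1)))) := by
      have t1 : Filter.Tendsto (fun k => z + g ((u k).2.1 - A.mulVec z)) Filter.atTop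
          (nhds (z + g (p.2.1 - A.mulVec z))) :=
        tendsto_const_nhds.add
          ((g.continuous_of_finiteDimensional.tendsto _).comp (hb.sub tendsto_const_nhds))
      have t2 := ((g.continuous_of_finiteDimensional.tendsto _).comp hres)
      exact ((continuous_l1.tendsto _).comp t1).add ((continuous_l1.tendsto _).comp t2)
    have hfin : l1 p.2.2 ≤ l1 (z + g (p.2.1 - A.mulVec z)) + l1 (g (A.mulVec p.2.2 - p.2.1)) :=
      le_of_tendsto_of_tendsto' hl1x hrhs2 hbd
    rw [hz, hAxb] at hfin
    simpa [map_zero, l1] using hfin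
  · -- λ > 0 case
    rw [Sol, if_neg (ne_of_gt hpos)]
    intro z
    have hev : ∀ᶠ k in Filter.atTop, (0:ℝ) < (u k).1 :=
      hl.eventually (eventually_gt_nhds hpos)
    have hinv : Filter.Tendsto (fun k => 1 / (2 * (u k).1)) Filter.atTop
        (nhds (1 / (2 * p.1))) := by
      apply Filter.Tendsto.div tendsto_const_nhds (tendsto_const_nhds.mul hl)
      positivity
    have hlhs : Filter.Tendsto
        (fun k => l1 ((u k).2.2) + 1 / (2 * (u k).1) * sqnorm (A.mulVec ((u k).2.2) - (u k).2.1))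
        Filter.atTop
        (nhds (l1 p.2.2 + 1 / (2 * p.1) * sqnorm (A.mulVec p.2.2 - p.2.1))) :=
      hl1x.add (hinv.mul hS)
    have hSz : Filter.Tendsto (fun k => sqnorm (A.mulVec z - (u k).2.1)) Filter.atTop
        (nhds (sqnorm (A.mulVec z - p.2.1))) :=
      (continuous_sqnorm.tendsto _).comp (tendsto_const_nhds.sub hb)
    have hrhs : Filter.Tendsto
        (fun k => l1 z + 1 / (2 * (u k).1) * sqnorm (A.mulVec z - (u k).2.1))
        Filter.atTop
        (nhds (l1 z + 1 / (2 * p.1) * sqnorm (A.mulVec z - p.2.1))) :=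
      tendsto_const_nhds.add (hinv.mul hSz)
    refine le_of_tendsto_of_tendsto hlhs hrhs ?_
    filter_upwards [hev] with k hk
    have := (hu k).2
    rw [Sol, if_neg (ne_of_gt hk)] at this
    exact this z
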